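/- arXiv:2502.14436 — 2 statements merged into one kernel-verified Lean document; each statement's English description precedes it below -/
import Mathlib

section
/- Let $F$ be a finite field, $f \in F[X]$ a polynomial whose largest square-free divisor has degree $D$, and $\mathcal{W}$ a finite subset of $F$. Let $\mathcal{B}$ be the set of pairs $(w_1, w_2) \in \mathcal{W}^2$ such that $f(X + w_1)$ and $f(X + w_2)$ share roots (in an algebraic closure) that are conjugate over a fixed subfield $K$ of $F$ with $[F : K] = 2$. Then $\#\mathcal{B} \le 2 D^2 \cdot \#\mathcal{W}$. -/
open Polynomial

/-!
If `(w₁, w₂)` is bad, witnessed by a root `x` of `f(X + w₁)` and an automorphism `σ` fixing `K`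
with `σ x + w₂` a root of `f`, then `ψ := σ ∘ (F → F̄)` is one of the `[F : K] = 2` embeddings
of `F` over `K`, `t := σ (x + w₁)` is a root of `f^ψ`, and `w₂ = s - t + ψ w₁` for the root
`s := σ x + w₂` of `f`. Since `f` and each `f^ψ` have at most `D` distinct roots (all roots of
`f` are roots of its maximal squarefree divisor), each `w₁` admits at most `2 D²` partners `w₂`.
-/

section RootCount

variable {F : Type*} [Field F] {f g : F[X]}

theorem Polynomial.Irreducible.dvd_of_dvd_of_squarefree_of_natDegree_max {p : F[X]}
    (hp : Irreducible p) (hpf : p ∣ f) (hg : Squarefree g) (hgf : g ∣ f)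
    (hmax : ∀ h : F[X], Squarefree h → h ∣ f → h.natDegree ≤ g.natDegree) : p ∣ g := by
  by_contra hpg
  have hcop : IsRelPrime p g := hp.isRelPrime_iff_not_dvd.mpr hpg
  have hdeg := hmax (p * g) (squarefree_mul_iff.mpr ⟨hcop, hp.squarefree, hg⟩)
    (hcop.mul_dvd hpf hgf)
  rw [natDegree_mul hp.ne_zero hg.ne_zero] at hdeg
  have := hp.natDegree_pos
  omega

theorem Polynomial.aeval_eq_zero_of_forall_irreducible_dvd
    {L : Type*} [CommRing L] [IsDomain L] [Algebra F L] (hf : f ≠ 0)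
    (hdvd : ∀ p : F[X], Irreducible p → p ∣ f → p ∣ g) {r : L}
    (hr : aeval r f = 0) : aeval r g = 0 := by
  have hint : IsIntegral F r := IsAlgebraic.isIntegral ⟨f, hf, hr⟩
  obtain ⟨c, rfl⟩ := hdvd _ (minpoly.irreducible hint) (minpoly.dvd F r hr)
  rw [map_mul, minpoly.aeval, zero_mul]

theorem Polynomial.card_roots_toFinset_map_le_of_squarefree_of_natDegree_max
    {L : Type*} [Field L] [DecidableEq L]
    (hf : f ≠ 0) (hg : Squarefree g) (hgf : g ∣ f)
    (hmax : ∀ h : F[X], Squarefree h → h ∣ f → h.natDegree ≤ g.natDegree) (ψ : F →+* L) :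
    (f.map ψ).roots.toFinset.card ≤ g.natDegree := by
  let := ψ.toAlgebra
  have hsub : (f.map ψ).roots.toFinset ⊆ (g.map ψ).roots.toFinset := by
    intro r hr
    rw [Multiset.mem_toFinset, mem_roots_map hf] at hr
    rw [Multiset.mem_toFinset, mem_roots_map hg.ne_zero]
    exact aeval_eq_zero_of_forall_irreducible_dvd hf
      (fun p hp hpf => hp.dvd_of_dvd_of_squarefree_of_natDegree_max hpf hg hgf hmax) hr
  calc _ ≤ (g.map ψ).roots.toFinset.card := Finset.card_le_card hsub
    _ ≤ (g.map ψ).roots.card := Multiset.toFinset_card_le _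
    _ ≤ (g.map ψ).natDegree := card_roots' _
    _ ≤ g.natDegree := natDegree_map_le

end RootCount

section Conjugates

variable {F : Type*} [Field F] (K : Subfield F) [FiniteDimensional K F]
  (L : Type*) [Field L] [Algebra F L] [DecidableEq L]

noncomputable def shiftCandidates (f : F[X]) (w : F) : Finset L :=
  Finset.univ.biUnion fun ψ : F →ₐ[K] L =>
    Finset.image₂ (fun s t => s - t + ψ w)
      (f.map (algebraMap F L)).roots.toFinset (f.map (ψ : F →+* L)).roots.toFinset

theorem card_shiftCandidates_le {f : F[X]} {D : ℕ}
    (hD : ∀ ψ : F →+* L, (f.map ψ).roots.toFinset.card ≤ D) (w : F) :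
    (shiftCandidates K L f w).card ≤ Nat.card (F →ₐ[K] L) * D ^ 2 := by
  calc _ ≤ ∑ ψ : F →ₐ[K] L, D * D := Finset.card_biUnion_le.trans <|
        Finset.sum_le_sum fun ψ _ => (Finset.card_image₂_le _ _ _).trans <|
          Nat.mul_le_mul (hD _) (hD _)
    _ = _ := by
      rw [Finset.sum_const, Finset.card_univ, Fintype.card_eq_nat_card, smul_eq_mul, sq]

variable {K L}

theorem algebraMap_mem_shiftCandidates {f : F[X]} (hf : f ≠ 0) {w₁ w₂ : F} {x : L}
    (σ : L ≃+* L) (hσ : ∀ a ∈ K, σ (algebraMap F L a) = algebraMap F L a)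
    (hx : aeval x (f.comp (X + C w₁)) = 0) (hy : aeval (σ x) (f.comp (X + C w₂)) = 0) :
    algebraMap F L w₂ ∈ shiftCandidates K L f w₁ := by
  simp only [aeval_comp, map_add, aeval_X, aeval_C] at hx hy
  let ψ : F →ₐ[K] L :=
    { (σ : L →+* L).comp (algebraMap F L) with commutes' := fun k => hσ k k.2 }
  have hs : σ x + algebraMap F L w₂ ∈ (f.map (algebraMap F L)).roots.toFinset := by
    rwa [Multiset.mem_toFinset, mem_roots_map hf]
  have ht : σ (x + algebraMap F L w₁) ∈ (f.map (ψ : F →+* L)).roots.toFinset := by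
    rw [Multiset.mem_toFinset, mem_roots_map hf]
    exact (hom_eval₂ f (algebraMap F L) (σ : L →+* L) _).symm.trans <|
      (congrArg σ hx).trans (map_zero σ)
  refine Finset.mem_biUnion.mpr ⟨ψ, Finset.mem_univ _, Finset.mem_image₂.mpr ⟨_, hs, _, ht, ?_⟩⟩
  show σ x + algebraMap F L w₂ - σ (x + algebraMap F L w₁) + σ (algebraMap F L w₁) = _
  rw [map_add]
  ring

end Conjugates

theorem Set.ncard_le_mul_card_of_fiber_ncard_le {α β : Type*} [Finite β] {B : Set (α × β)}
    {W : Finset α} (hW : ∀ q ∈ B, q.1 ∈ W) (n : ℕ)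
    (hn : ∀ a ∈ W, {b | (a, b) ∈ B}.ncard ≤ n) : B.ncard ≤ n * W.card := by
  classical
  have hfin : B.Finite :=
    (W.finite_toSet.prod Set.finite_univ).subset fun q hq => ⟨hW q hq, trivial⟩
  rw [← hfin.coe_toFinset, Set.ncard_coe_finset]
  refine Finset.card_le_mul_card_image_of_maps_to (f := Prod.fst) (by simpa using hW) n
    fun a ha => ?_
  calc _ = ((fun b => (a, b)) '' {b | (a, b) ∈ B}).ncard := by
        rw [← Set.ncard_coe_finset]; congr 1; ext ⟨a', b⟩; aesop
    _ ≤ n := (Set.ncard_image_of_injective _ (Prod.mk_right_injective a)).trans_le (hn a ha)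

/-- Let `F` be a finite field, `K` a subfield with `[F : K] = 2`, `f ∈ F[X]` a nonzero
polynomial whose largest square-free divisor (radical) has degree `D`, and `W ⊆ F` finite.
The set `B` of pairs `(w₁, w₂) ∈ W²` such that `f(X + w₁)` and `f(X + w₂)` have roots
(in an algebraic closure) that are conjugate over `K` satisfies `#B ≤ 2 D² #W`.
Here `x` and `y` are conjugate over `K` iff some ring automorphism of the algebraic
closure fixing `K` pointwise sends `x` to `y`. -/
theorem card_bad_pairs_le
    (F : Type) [Field F] [Fintype F]
    (K : Subfield F) (hK : Module.finrank K F = 2)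
    (f : F[X]) (hf : f ≠ 0) (D : ℕ)
    (hD : ∃ g : F[X], Squarefree g ∧ g ∣ f ∧ g.natDegree = D ∧
      ∀ h : F[X], Squarefree h → h ∣ f → h.natDegree ≤ D)
    (W : Finset F) :
    ({q : F × F | q.1 ∈ W ∧ q.2 ∈ W ∧
        ∃ x y : AlgebraicClosure F,
          Polynomial.aeval x (f.comp (X + C q.1)) = 0 ∧
          Polynomial.aeval y (f.comp (X + C q.2)) = 0 ∧
          ∃ σ : AlgebraicClosure F ≃+* AlgebraicClosure F,
            (∀ a : F, a ∈ K →
              σ (algebraMap F (AlgebraicClosure F) a) = algebraMap F (AlgebraicClosure F) a) ∧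
            σ x = y}).ncard ≤ 2 * D ^ 2 * W.card := by
  classical
  obtain ⟨g, hg, hgf, rfl, hmax⟩ := hD
  have hroots := card_roots_toFinset_map_le_of_squarefree_of_natDegree_max
    (L := AlgebraicClosure F) hf hg hgf hmax
  have hembed : Nat.card (F →ₐ[K] AlgebraicClosure F) = 2 :=
    Nat.card_eq_fintype_card.trans ((AlgHom.card K F _).trans hK)
  refine Set.ncard_le_mul_card_of_fiber_ncard_le (fun q hq => hq.1) _ fun w₁ _ => ?_
  calc _ ≤ (shiftCandidates K (AlgebraicClosure F) f w₁ : Set (AlgebraicClosure F)).ncard := by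
        refine Set.ncard_le_ncard_of_injOn _ ?_ (algebraMap F _).injective.injOn
        rintro w₂ ⟨-, -, x, _, hx, hy, σ, hσ, rfl⟩
        exact algebraMap_mem_shiftCandidates hf σ hσ hx hy
    _ ≤ 2 * g.natDegree ^ 2 := by
        rw [Set.ncard_coe_finset]
        exact hembed ▸ card_shiftCandidates_le K _ hroots w₁
end

section
/- For every integer $t \ge 3$, the number of square-free divisors of $t-1$ satisfies $W(t-1) < t^{0.96/\log\log t}$. -/
/-!
Write `k = ω(t - 1)` and `L = log t`. Then `W(t - 1) = 2 ^ k`, and `t - 1` is at least the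
product `Pₖ` of the first `k` primes, so it suffices that `k * log 2 * log L < 0.96 * L` for
`L ≥ log Pₖ`. As `log x / x` decreases on `[e, ∞)`, it is enough to check this at any lower
bound `ℓ ≥ e` of `log Pₖ`. For `k ≤ 3` the bound `log L ≤ L / e` suffices. For `4 ≤ k ≤ 13`
the inequality is tight (the ratio is `0.9593…` at `k = 9`) and is checked with `ℓ = log Pₖ`
through certificates in binary logarithms. For `k ≥ 14`, `Pₖ ≥ k ^ k` follows inductively from
`p_{k+1} ≥ 3k - 1` (a wheel modulo 6) and `(1 + 1/k) ^ k ≤ e`; with `ℓ = k log k` the ratio is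
then at most `log 2 * (1 + 1/e) < 0.96`.
-/

open Finset Real
open Nat (nth count)

namespace SquarefreeDivisorBound

theorem ncard_squarefree_dvd {n : ℕ} (hn : n ≠ 0) :
    {d : ℕ | d ∣ n ∧ Squarefree d}.ncard = 2 ^ #n.primeFactors := by
  have hset : {d : ℕ | d ∣ n ∧ Squarefree d} = ↑{d ∈ n.divisors | Squarefree d} := by
    ext d
    simp [hn]
  rw [hset, Set.ncard_coe_finset, card_eq_sum_ones, Nat.sum_divisors_filter_squarefree hn,
    sum_const, card_powerset, smul_eq_mul, mul_one, Nat.factors_eq]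
  rfl

theorem prod_range_nth_le_prod {p : ℕ → Prop} [DecidablePred p] (s : Finset ℕ)
    (hs : ∀ x ∈ s, p x) : ∏ i ∈ range #s, nth p i ≤ ∏ x ∈ s, x := by
  induction s using Finset.induction_on_max with
  | empty => simp
  | insert a s hlt ih =>
    have ha : a ∉ s := fun h => (hlt a h).false
    have hpa : p a := hs a (mem_insert_self a s)
    rw [card_insert_of_notMem ha, prod_range_succ, prod_insert ha, mul_comm]
    gcongr
    · refine Nat.le_of_lt_succ (Nat.nth_lt_of_lt_count ?_)
      rw [Nat.count_succ, if_pos hpa, Nat.count_eq_card_filter_range]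
      refine Nat.lt_succ_of_le (card_le_card fun x hx => ?_)
      exact mem_filter.2 ⟨mem_range.2 (hlt x hx), hs x (mem_insert_of_mem hx)⟩
    · exact ih fun x hx => hs x (mem_insert_of_mem hx)

def firstPrimes : List ℕ := [2, 3, 5, 7, 11, 13, 17, 19, 23, 29, 31, 37, 41, 43]

theorem getD_firstPrimes_le_nth_prime {j : ℕ} (hj : j < 14) :
    firstPrimes.getD j 0 ≤ nth Nat.Prime j := by
  have hcount : ∀ j < 14, count Nat.Prime (firstPrimes.getD j 0) ≤ j := by decide
  exact (Nat.count_le_iff_le_nth Nat.infinite_setOfPred_prime).1 (hcount j hj)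

theorem prod_firstPrimes_le_prod_nth_prime {k : ℕ} (hk : k ≤ 14) :
    ∏ i ∈ range k, firstPrimes.getD i 0 ≤ ∏ i ∈ range k, nth Nat.Prime i :=
  prod_le_prod' fun _ hi => getD_firstPrimes_le_nth_prime ((mem_range.1 hi).trans_le hk)

theorem count_prime_three_mul_sub_one_le {j : ℕ} (hj : 14 ≤ j) :
    count Nat.Prime (3 * j - 1) ≤ j := by
  rcases lt_or_ge j 17 with hj17 | hj17
  · interval_cases j <;> decide
  · set m := (j - 17) / 2
    -- Above 53 only residues `±1` modulo 6 can be prime, and 15 primes lie below 53.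
    have hwheel :=
      Nat.primeCounting'_add_le (a := 6) (k := 53) (by norm_num) (by norm_num) (6 * m)
    have h53 : Nat.primeCounting' 53 = 15 := by decide
    have h6 : Nat.totient 6 = 2 := by decide
    rw [h53, h6, Nat.mul_div_cancel_left m (by norm_num)] at hwheel
    calc count Nat.Prime (3 * j - 1) ≤ count Nat.Prime (53 + 6 * m) :=
          Nat.count_monotone _ (by omega)
      _ ≤ j := by unfold Nat.primeCounting' at hwheel; omega

theorem three_mul_sub_one_le_nth_prime {j : ℕ} (hj : 14 ≤ j) : 3 * j - 1 ≤ nth Nat.Prime j :=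
  (Nat.count_le_iff_le_nth Nat.infinite_setOfPred_prime).1 (count_prime_three_mul_sub_one_le hj)

theorem succ_pow_succ_le_mul_pow_self {k : ℕ} (hk : 14 ≤ k) :
    (k + 1) ^ (k + 1) ≤ (3 * k - 1) * k ^ k := by
  have hk0 : (0 : ℝ) < k := by positivity
  have hpow : ((k : ℝ) + 1) ^ k ≤ exp 1 * (k : ℝ) ^ k := by
    calc ((k : ℝ) + 1) ^ k = (1 + (k : ℝ)⁻¹) ^ k * (k : ℝ) ^ k := by
          rw [← mul_pow, add_mul, one_mul, inv_mul_cancel₀ hk0.ne', add_comm]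
      _ ≤ exp 1 * (k : ℝ) ^ k := by gcongr; exact one_add_inv_pow_le_exp
  have he : exp 1 * ((k : ℝ) + 1) ≤ 3 * k - 1 := by
    have : (14 : ℝ) ≤ k := by exact_mod_cast hk
    nlinarith [exp_one_lt_d9]
  have hreal : ((k : ℝ) + 1) ^ (k + 1) ≤ (3 * k - 1) * (k : ℝ) ^ k := by
    calc ((k : ℝ) + 1) ^ (k + 1) = ((k : ℝ) + 1) * ((k : ℝ) + 1) ^ k := pow_succ' _ _
      _ ≤ ((k : ℝ) + 1) * (exp 1 * (k : ℝ) ^ k) := by gcongr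
      _ = exp 1 * ((k : ℝ) + 1) * (k : ℝ) ^ k := by ring
      _ ≤ (3 * k - 1) * (k : ℝ) ^ k := by gcongr
  have hcast : ((3 * k - 1 : ℕ) : ℝ) = 3 * k - 1 := by
    rw [Nat.cast_sub (by omega)]; push_cast; ring
  exact_mod_cast hcast ▸ hreal

theorem pow_self_le_prod_nth_prime {k : ℕ} (hk : 14 ≤ k) :
    k ^ k ≤ ∏ i ∈ range k, nth Nat.Prime i := by
  induction k, hk using Nat.le_induction with
  | base => exact le_trans (by decide) (prod_firstPrimes_le_prod_nth_prime le_rfl)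
  | succ k hk ih =>
    rw [prod_range_succ]
    calc (k + 1) ^ (k + 1) ≤ (3 * k - 1) * k ^ k := succ_pow_succ_le_mul_pow_self hk
      _ ≤ nth Nat.Prime k * ∏ i ∈ range k, nth Nat.Prime i := by
          gcongr; exact three_mul_sub_one_le_nth_prime hk
      _ = _ := mul_comm _ _

theorem mul_log_le_mul_log_of_pow_le {x y : ℝ} {m n : ℕ} (hx : 0 < x) (h : x ^ m ≤ y ^ n) :
    m * log x ≤ n * log y := by
  simpa only [log_pow] using log_le_log (by positivity) h

theorem log_le_div_exp_one {x : ℝ} (hx : 0 < x) : log x ≤ x / exp 1 := by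
  have := log_le_sub_one_of_pos (div_pos hx (exp_pos 1))
  rw [log_div hx.ne' (exp_pos 1).ne', log_exp] at this
  linarith

theorem mul_log_lt_mul_of_exp_one_le {b c ℓ L : ℝ} (hc : 0 ≤ c) (hℓ : exp 1 ≤ ℓ) (hℓL : ℓ ≤ L)
    (h : c * log ℓ < b * ℓ) : c * log L < b * L := by
  have hℓ0 : 0 < ℓ := (exp_pos 1).trans_le hℓ
  have hL0 : 0 < L := hℓ0.trans_le hℓL
  have hanti : log L / L ≤ log ℓ / ℓ := log_div_self_antitoneOn hℓ (hℓ.trans hℓL) hℓL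
  have h' : c * (log ℓ / ℓ) < b := by rw [← mul_div_assoc, div_lt_iff₀ hℓ0]; exact h
  calc c * log L = c * (log L / L) * L := by field_simp
    _ ≤ c * (log ℓ / ℓ) * L := by gcongr
    _ < b * L := by gcongr

theorem mul_log_two_mul_log_lt_of_le_three {k : ℕ} (hk : k ≤ 3) {L : ℝ} (hL : 0 < L) :
    k * log 2 * log L < 0.96 * L := by
  have hk' : (k : ℝ) ≤ 3 := by exact_mod_cast hk
  have hk2 : k * log 2 < 0.96 * exp 1 := by
    nlinarith [log_two_lt_d9, log_two_gt_d9, exp_one_gt_d9, k.cast_nonneg (α := ℝ)]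
  calc k * log 2 * log L ≤ k * log 2 * (L / exp 1) := by
        gcongr; exact log_le_div_exp_one hL
    _ < 0.96 * L := by
        rw [mul_div_assoc', div_lt_iff₀ (exp_pos 1)]; nlinarith

theorem log_two_mul_log_mul_log_lt {x : ℝ} (hx : 1 < x) :
    log 2 * log (x * log x) < 0.96 * log x := by
  have hlog : 0 < log x := log_pos hx
  have hloglog : log (log x) ≤ log x / exp 1 := log_le_div_exp_one hlog
  have hconst : log 2 * (exp 1 + 1) < 0.96 * exp 1 := by
    nlinarith [log_two_lt_d9, exp_one_gt_d9]
  rw [log_mul (by linarith) hlog.ne']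
  calc log 2 * (log x + log (log x)) ≤ log 2 * (log x + log x / exp 1) := by
        gcongr
    _ = log 2 * (exp 1 + 1) * log x / exp 1 := by field_simp
    _ < 0.96 * exp 1 * log x / exp 1 := by gcongr
    _ = 0.96 * log x := by field_simp

-- With `ℓ = a / N * log 2` these give `ℓ ≤ log P`, `N * log ℓ ≤ d * log 2` (as
-- `0.6931471808 > log 2`) and `k * d * log 2 < 0.96 * a`, hence `k * log 2 * log ℓ < 0.96 * ℓ`.
def IsLogCertificate (N k P a d : ℕ) : Prop :=
  4 * N ≤ a ∧ 2 ^ a ≤ P ^ N ∧ (a * 6931471808) ^ N ≤ 2 ^ d * (N * 10 ^ 10) ^ N ∧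
    100 * k * d * 6931471808 < 96 * a * 10 ^ 10

instance (N k P a d : ℕ) : Decidable (IsLogCertificate N k P a d) := by
  unfold IsLogCertificate; infer_instance

namespace IsLogCertificate

variable {N k P a d : ℕ}

theorem mono {Q : ℕ} (h : IsLogCertificate N k P a d) (hPQ : P ≤ Q) :
    IsLogCertificate N k Q a d :=
  ⟨h.1, h.2.1.trans (Nat.pow_le_pow_left hPQ _), h.2.2⟩

theorem pos (h : IsLogCertificate N k P a d) : 0 < N := by
  obtain ⟨-, hPa, -, hkd⟩ := h
  refine Nat.pos_of_ne_zero fun h0 => ?_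
  rw [h0, pow_zero] at hPa
  have ha0 : a = 0 := by_contra fun ha0 => (Nat.one_lt_two_pow ha0).not_ge hPa
  simp [ha0] at hkd

theorem le_log (h : IsLogCertificate N k P a d) : a / N * log 2 ≤ log P := by
  have hN : (0 : ℝ) < N := by exact_mod_cast h.pos
  have := mul_log_le_mul_log_of_pow_le two_pos (y := P) (by exact_mod_cast h.2.1)
  rw [div_mul_eq_mul_div, div_le_iff₀ hN]
  linarith

theorem mul_log_le (h : IsLogCertificate N k P a d) : N * log (a / N * log 2) ≤ d * log 2 := by
  have hN : (0 : ℝ) < N := by exact_mod_cast h.pos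
  have had : ((a : ℝ) * 6931471808) ^ N ≤ 2 ^ d * ((N : ℝ) * 10 ^ 10) ^ N := by
    exact_mod_cast h.2.2.1
  have hu : (a / N * 0.6931471808 : ℝ) ^ N ≤ 2 ^ d := calc
    (a / N * 0.6931471808 : ℝ) ^ N = (a * 6931471808) ^ N / (N * 10 ^ 10) ^ N := by
        rw [← div_pow]; congr 1; field_simp; ring
    _ ≤ 2 ^ d := div_le_of_le_mul₀ (by positivity) (by positivity) had
  have ha : (0 : ℝ) < a := by exact_mod_cast (show 0 < a by have := h.1; have := h.pos; omega)
  refine mul_log_le_mul_log_of_pow_le (by positivity) (le_trans ?_ hu)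
  gcongr
  exact log_two_lt_d9.le

theorem mul_log_two_mul_log_lt (h : IsLogCertificate N k P a d) {L : ℝ} (hL : log P ≤ L) :
    k * log 2 * log L < 0.96 * L := by
  have hN : (0 : ℝ) < N := by exact_mod_cast h.pos
  have ha : (4 : ℝ) ≤ a / N := by
    rw [le_div_iff₀ hN]; exact_mod_cast h.1
  have hkd : (k : ℝ) * d * log 2 < 0.96 * a := by
    have : (100 * k * d * 6931471808 : ℝ) < 96 * a * 10 ^ 10 := by exact_mod_cast h.2.2.2
    nlinarith [log_two_lt_d9, (by positivity : (0 : ℝ) ≤ k * d)]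
  have hlog : log (a / N * log 2) ≤ d * log 2 / N := by
    rw [le_div_iff₀ hN, mul_comm]; exact h.mul_log_le
  refine mul_log_lt_mul_of_exp_one_le (by positivity) ?_ (h.le_log.trans hL) ?_
  · nlinarith [exp_one_lt_d9, log_two_gt_d9]
  calc k * log 2 * log (a / N * log 2) ≤ k * log 2 * (d * log 2 / N) := by gcongr
    _ = k * d * log 2 * log 2 / N := by ring
    _ < 0.96 * a * log 2 / N := by gcongr
    _ = 0.96 * (a / N * log 2) := by ring

end IsLogCertificate

-- `a = ⌊1024 log₂ Pₖ⌋` for the product `Pₖ` of the first `k` primes, and `d` is the least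
-- admissible value.
def binaryLogCertificate : ℕ → ℕ × ℕ
  | 4 => (7899, 2477) | 5 => (11441, 3025) | 6 => (15231, 3447) | 7 => (19416, 3806)
  | 8 => (23766, 4105) | 9 => (28398, 4368) | 10 => (33373, 4606) | 11 => (38446, 4815)
  | 12 => (43780, 5007) | 13 => (49266, 5181) | _ => (0, 0)

theorem isLogCertificate_binaryLogCertificate {k : ℕ} (hk4 : 4 ≤ k) (hk : k < 14) :
    IsLogCertificate 1024 k (∏ i ∈ range k, firstPrimes.getD i 0)
      (binaryLogCertificate k).1 (binaryLogCertificate k).2 := by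
  have hcert : ∀ k < 14, 4 ≤ k → IsLogCertificate 1024 k (∏ i ∈ range k, firstPrimes.getD i 0)
      (binaryLogCertificate k).1 (binaryLogCertificate k).2 := by
    decide +kernel
  exact hcert k hk hk4

theorem mul_log_two_mul_log_lt_of_fourteen_le {k : ℕ} (hk : 14 ≤ k) {L : ℝ}
    (hL : log (∏ i ∈ range k, nth Nat.Prime i : ℕ) ≤ L) : k * log 2 * log L < 0.96 * L := by
  have hk' : (14 : ℝ) ≤ k := by exact_mod_cast hk
  have hlogk : 1 ≤ log k := by
    rw [le_log_iff_exp_le (by positivity)]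
    linarith [exp_one_lt_d9]
  have hℓ : k * log k ≤ log (∏ i ∈ range k, nth Nat.Prime i : ℕ) := by
    rw [← log_pow]
    exact log_le_log (by positivity) (by exact_mod_cast pow_self_le_prod_nth_prime hk)
  apply mul_log_lt_mul_of_exp_one_le (by positivity) (by nlinarith [exp_one_lt_d9]) (hℓ.trans hL)
  have := mul_lt_mul_of_pos_left (log_two_mul_log_mul_log_lt (x := k) (by linarith))
    (by positivity : (0 : ℝ) < k)
  linarith

theorem mul_log_two_mul_log_lt (k : ℕ) {L : ℝ} (hL0 : 0 < L)
    (hL : log (∏ i ∈ range k, nth Nat.Prime i : ℕ) ≤ L) : k * log 2 * log L < 0.96 * L := by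
  rcases lt_or_ge k 4 with hk4 | hk4
  · exact mul_log_two_mul_log_lt_of_le_three (by omega) hL0
  rcases lt_or_ge k 14 with hk14 | hk14
  · exact ((isLogCertificate_binaryLogCertificate hk4 hk14).mono
      (prod_firstPrimes_le_prod_nth_prime hk14.le)).mul_log_two_mul_log_lt hL
  · exact mul_log_two_mul_log_lt_of_fourteen_le hk14 hL

end SquarefreeDivisorBound

open SquarefreeDivisorBound in
/-- For every integer `t ≥ 3`, the number `W(t-1)` of square-free divisors of `t-1`
satisfies `W(t-1) < t^{0.96/log log t}`. -/
theorem squarefree_divisor_count_bound (t : ℕ) (ht : 3 ≤ t) :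
    ({d : ℕ | d ∣ t - 1 ∧ Squarefree d}.ncard : ℝ) <
      (t : ℝ) ^ ((0.96 : ℝ) / Real.log (Real.log t)) := by
  have hn : t - 1 ≠ 0 := by omega
  set k := #(t - 1).primeFactors
  have ht0 : (0 : ℝ) < t := by positivity
  have hL : 1 < log t := by
    rw [lt_log_iff_exp_lt ht0]
    have : (3 : ℝ) ≤ t := by exact_mod_cast ht
    linarith [exp_one_lt_d9]
  have hprod : ∏ i ∈ range k, nth Nat.Prime i ≤ t := calc
    ∏ i ∈ range k, nth Nat.Prime i ≤ ∏ p ∈ (t - 1).primeFactors, p :=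
      prod_range_nth_le_prod _ fun _ => Nat.prime_of_mem_primeFactors
    _ ≤ t - 1 := Nat.le_of_dvd (by omega) (Nat.prod_primeFactors_dvd _)
    _ ≤ t := Nat.sub_le t 1
  have hkey := mul_log_two_mul_log_lt k (by linarith) (log_le_log
    (by exact_mod_cast prod_pos fun i _ => (Nat.prime_nth_prime i).pos) (by exact_mod_cast hprod))
  have hlogL : 0 < log (log t) := log_pos hL
  rw [ncard_squarefree_dvd hn, Nat.cast_pow, Nat.cast_two, rpow_def_of_pos ht0,
    ← exp_log (by positivity : (0 : ℝ) < 2 ^ k), log_pow, exp_lt_exp, mul_div_assoc',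
    lt_div_iff₀ hlogL]
  exact hkey.trans_eq (mul_comm _ _)
end
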